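/- Let a > 1/2, let f ∈ L^{2,a}(ℝ) satisfy e^{C|q|}f(q) ∈ L^{2,a}(ℝ) for some C > 0, and let m = ±1 and α > 0. Then the shifted triple convolution restricted to the scaled Brillouin zone satisfies ‖χ_{[-π/α,π/α]}(Q) · (f*f*f)(Q - 2mπ/α)‖_{L^{2,a}(ℝ_Q)} ≤ C' e^{-Cπ/α} ‖e^{C|Q|}f(Q)‖³_{L^{2,a}(ℝ_Q)} for a constant C' depending only on a. -/

import Mathlib

open MeasureTheory

/-- Convolution on ℝ. -/
noncomputable def convR (f g : ℝ → ℂ) (q : ℝ) : ℂ :=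
  ∫ ξ : ℝ, f ξ * g (q - ξ)

/-!
On the zone `|Q| ≤ π/α` the shifted point `q = Q - 2mπ/α` satisfies `|q| ≥ π/α` and `|Q| ≤ |q|`.
Since `e^{C|·|}` is submultiplicative, `e^{C|q|} |f * f * f|(q) ≤ (F * F * F)(q)` with
`F = e^{C|·|} |f|`, so on the zone the shifted convolution is at most `e^{-Cπ/α} (F * F * F)(q)`,
measured with the larger weight `⟨q⟩^a`. It remains that `L^{2,a}` is a convolution algebra for
`a > 1/2`: the bound `⟨x + y⟩^a ≲ ⟨x⟩^a + ⟨y⟩^a` moves the weight onto one factor, Young's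
inequality gives `‖u * v‖₂ ≤ ‖u‖₂ ‖v‖₁`, and Cauchy–Schwarz against `⟨·⟩^{-a} ∈ L²` gives
`‖v‖₁ ≲ ‖v‖_{L^{2,a}}`.
All estimates are made for lower Lebesgue integrals of nonnegative functions.
-/

open scoped ENNReal

namespace ENNReal

theorem add_sq_le_two_mul (x y : ℝ≥0∞) : (x + y) ^ 2 ≤ 2 * (x ^ 2 + y ^ 2) := by
  have h := rpow_add_le_mul_rpow_add_rpow x y (p := 2) one_le_two
  norm_num [rpow_two] at h
  exact h

variable {α : Type*} [MeasurableSpace α] {μ : Measure α} {f g : α → ℝ≥0∞}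

theorem sq_lintegral_mul_le (hf : AEMeasurable f μ) (hg : AEMeasurable g μ) :
    (∫⁻ x, f x * g x ∂μ) ^ 2 ≤ (∫⁻ x, f x ^ 2 ∂μ) * ∫⁻ x, g x ^ 2 ∂μ := by
  have h := lintegral_mul_norm_pow_le (hf.pow_const 2) (hg.pow_const 2)
    (p := (2 : ℕ)⁻¹) (q := (2 : ℕ)⁻¹) (by positivity) (by positivity) (by norm_num)
  simp only [pow_rpow_inv_natCast two_ne_zero] at h
  calc (∫⁻ x, f x * g x ∂μ) ^ 2
      ≤ ((∫⁻ x, f x ^ 2 ∂μ) ^ ((2 : ℕ)⁻¹ : ℝ) * (∫⁻ x, g x ^ 2 ∂μ) ^ ((2 : ℕ)⁻¹ : ℝ)) ^ 2 :=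
        pow_le_pow_left' h 2
    _ = (∫⁻ x, f x ^ 2 ∂μ) * ∫⁻ x, g x ^ 2 ∂μ := by
        rw [mul_pow, rpow_inv_natCast_pow two_ne_zero, rpow_inv_natCast_pow two_ne_zero]

theorem sq_lintegral_mul_le_lintegral_sq_mul (hf : AEMeasurable f μ) (hg : AEMeasurable g μ) :
    (∫⁻ x, f x * g x ∂μ) ^ 2 ≤ (∫⁻ x, f x ^ 2 * g x ∂μ) * ∫⁻ x, g x ∂μ := by
  set r : α → ℝ≥0∞ := fun x => g x ^ ((2 : ℕ)⁻¹ : ℝ)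
  have hr : ∀ x, r x ^ 2 = g x := fun x => rpow_inv_natCast_pow two_ne_zero _
  have h := sq_lintegral_mul_le (f := fun x => f x * r x) (g := r)
    (hf.mul (hg.pow_const _)) (hg.pow_const _)
  simp only [mul_assoc, mul_pow, ← sq, hr] at h
  exact h

theorem sq_lintegral_le_of_one_le_mul {v w : α → ℝ≥0∞} (hvw : ∀ x, 1 ≤ v x * w x)
    (hv : AEMeasurable v μ) (hwf : AEMeasurable (fun x => w x * f x) μ) :
    (∫⁻ x, f x ∂μ) ^ 2 ≤ (∫⁻ x, v x ^ 2 ∂μ) * ∫⁻ x, (w x * f x) ^ 2 ∂μ := by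
  calc (∫⁻ x, f x ∂μ) ^ 2 ≤ (∫⁻ x, v x * (w x * f x) ∂μ) ^ 2 := by
        gcongr with x
        calc f x = 1 * f x := (one_mul _).symm
          _ ≤ v x * w x * f x := by gcongr; exact hvw x
          _ = v x * (w x * f x) := mul_assoc _ _ _
    _ ≤ _ := sq_lintegral_mul_le hv hwf

end ENNReal

namespace MeasureTheory

variable {G : Type*} [MeasurableSpace G] [AddCommGroup G] {μ : Measure G} {f f' g g' : G → ℝ≥0∞}

theorem lconvolution_mono (hf : f ≤ f') (hg : g ≤ g') : f ⋆ₗ[μ] g ≤ f' ⋆ₗ[μ] g' :=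
  fun _ => lintegral_mono fun y => mul_le_mul' (hf y) (hg _)

theorem mul_lconvolution_le_of_le_mul {E : G → ℝ≥0∞} (hE : ∀ x y, E (x + y) ≤ E x * E y)
    (x : G) : E x * (f ⋆ₗ[μ] g) x ≤ ((E * f) ⋆ₗ[μ] (E * g)) x := by
  refine (lintegral_const_mul_le _ _).trans (lintegral_mono fun y => ?_)
  calc E x * (f y * g (-y + x)) ≤ E y * E (-y + x) * (f y * g (-y + x)) := by
        gcongr; simpa using hE y (-y + x)
    _ = (E * f) y * (E * g) (-y + x) := by simp only [Pi.mul_apply]; ring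

variable [MeasurableAdd₂ G] [MeasurableNeg G]

theorem mul_lconvolution_le_of_le_add {w : G → ℝ≥0∞} {c : ℝ≥0∞}
    (hw : ∀ x y, w (x + y) ≤ c * (w x + w y))
    (hwm : Measurable w) (hf : Measurable f) (hg : Measurable g) (x : G) :
    w x * (f ⋆ₗ[μ] g) x ≤ c * (((w * f) ⋆ₗ[μ] g) x + (f ⋆ₗ[μ] (w * g)) x) := by
  calc w x * (f ⋆ₗ[μ] g) x
      ≤ ∫⁻ y, c * (w y * f y * g (-y + x) + f y * (w (-y + x) * g (-y + x))) ∂μ := by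
        refine (lintegral_const_mul_le _ _).trans (lintegral_mono fun y => ?_)
        calc w x * (f y * g (-y + x)) ≤ c * (w y + w (-y + x)) * (f y * g (-y + x)) := by
              gcongr; simpa using hw y (-y + x)
          _ = _ := by ring
    _ = c * (((w * f) ⋆ₗ[μ] g) x + (f ⋆ₗ[μ] (w * g)) x) := by
        rw [lintegral_const_mul _ (by fun_prop), lintegral_add_left (by fun_prop)]
        rfl

theorem lintegral_lconvolution [SFinite μ] [μ.IsAddLeftInvariant] (hf : Measurable f)
    (hg : Measurable g) :
    ∫⁻ x, (f ⋆ₗ[μ] g) x ∂μ = (∫⁻ x, f x ∂μ) * ∫⁻ x, g x ∂μ := by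
  simp only [lconvolution_def]
  rw [lintegral_lintegral_swap (by fun_prop), ← lintegral_mul_const _ hf]
  refine lintegral_congr fun y => ?_
  rw [lintegral_const_mul _ (by fun_prop), lintegral_add_left_eq_self g (-y)]

variable [μ.IsAddLeftInvariant] [μ.IsNegInvariant]

theorem lconvolution_congr_ae (hf : f =ᵐ[μ] f') (hg : g =ᵐ[μ] g') :
    f ⋆ₗ[μ] g = f' ⋆ₗ[μ] g' := by
  ext x
  refine lintegral_congr_ae (hf.mul ?_)
  simp only [neg_add_eq_sub]
  exact (Measure.measurePreserving_sub_left μ x).quasiMeasurePreserving.ae_eq_comp hg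

variable [SFinite μ]

theorem lintegral_sq_lconvolution_le (hf : Measurable f) (hg : Measurable g) :
    ∫⁻ x, (f ⋆ₗ[μ] g) x ^ 2 ∂μ ≤ (∫⁻ x, f x ^ 2 ∂μ) * (∫⁻ x, g x ∂μ) ^ 2 := by
  have hpt : ∀ x, (f ⋆ₗ[μ] g) x ^ 2 ≤ ((fun y => f y ^ 2) ⋆ₗ[μ] g) x * ∫⁻ y, g y ∂μ := fun x => by
    have h := ENNReal.sq_lintegral_mul_le_lintegral_sq_mul (μ := μ) hf.aemeasurable
      (g := fun y => g (-y + x)) (by fun_prop)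
    simp only [neg_add_eq_sub, lintegral_sub_left_eq_self g x] at h
    simpa only [lconvolution_def, neg_add_eq_sub] using h
  calc ∫⁻ x, (f ⋆ₗ[μ] g) x ^ 2 ∂μ ≤ ∫⁻ x, ((fun y => f y ^ 2) ⋆ₗ[μ] g) x * ∫⁻ y, g y ∂μ ∂μ :=
        lintegral_mono hpt
    _ = (∫⁻ x, f x ^ 2 ∂μ) * (∫⁻ x, g x ∂μ) ^ 2 := by
        rw [lintegral_mul_const _ (measurable_lconvolution μ (hf.pow_const 2) hg),
          lintegral_lconvolution (hf.pow_const 2) hg, sq (∫⁻ x, g x ∂μ), mul_assoc]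

theorem lintegral_sq_mul_lconvolution_le {w v : G → ℝ≥0∞} {c : ℝ≥0∞}
    (hw : ∀ x y, w (x + y) ≤ c * (w x + w y)) (hvw : ∀ x, 1 ≤ v x * w x)
    (hwm : Measurable w) (hvm : Measurable v) (hf : Measurable f) (hg : Measurable g) :
    ∫⁻ x, (w x * (f ⋆ₗ[μ] g) x) ^ 2 ∂μ ≤
      4 * c ^ 2 * (∫⁻ x, v x ^ 2 ∂μ) * (∫⁻ x, (w x * f x) ^ 2 ∂μ) * ∫⁻ x, (w x * g x) ^ 2 ∂μ := by
  set κ := ∫⁻ x, v x ^ 2 ∂μ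
  set A := ∫⁻ x, (w x * f x) ^ 2 ∂μ
  set B := ∫⁻ x, (w x * g x) ^ 2 ∂μ
  have hL1f := ENNReal.sq_lintegral_le_of_one_le_mul (μ := μ) hvw hvm.aemeasurable
    (hwm.mul hf).aemeasurable
  have hL1g := ENNReal.sq_lintegral_le_of_one_le_mul (μ := μ) hvw hvm.aemeasurable
    (hwm.mul hg).aemeasurable
  have hX : ∫⁻ x, ((w * f) ⋆ₗ[μ] g) x ^ 2 ∂μ ≤ A * (κ * B) :=
    (lintegral_sq_lconvolution_le (hwm.mul hf) hg).trans (by gcongr; exact le_rfl)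
  have hY : ∫⁻ x, (f ⋆ₗ[μ] (w * g)) x ^ 2 ∂μ ≤ B * (κ * A) := by
    rw [lconvolution_comm]
    exact (lintegral_sq_lconvolution_le (hwm.mul hg) hf).trans (by gcongr; exact le_rfl)
  calc ∫⁻ x, (w x * (f ⋆ₗ[μ] g) x) ^ 2 ∂μ
      ≤ ∫⁻ x, 2 * c ^ 2 * (((w * f) ⋆ₗ[μ] g) x ^ 2 + (f ⋆ₗ[μ] (w * g)) x ^ 2) ∂μ := by
        refine lintegral_mono fun x => ?_
        calc (w x * (f ⋆ₗ[μ] g) x) ^ 2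
            ≤ (c * (((w * f) ⋆ₗ[μ] g) x + (f ⋆ₗ[μ] (w * g)) x)) ^ 2 :=
              pow_le_pow_left' (mul_lconvolution_le_of_le_add hw hwm hf hg x) 2
          _ ≤ _ := by
              rw [mul_pow, mul_comm 2, mul_assoc]
              gcongr
              exact ENNReal.add_sq_le_two_mul _ _
    _ = 2 * c ^ 2 * (∫⁻ x, ((w * f) ⋆ₗ[μ] g) x ^ 2 ∂μ + ∫⁻ x, (f ⋆ₗ[μ] (w * g)) x ^ 2 ∂μ) := by
        rw [lintegral_const_mul _ (by fun_prop), lintegral_add_left (by fun_prop)]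
    _ ≤ 2 * c ^ 2 * (A * (κ * B) + B * (κ * A)) := by gcongr
    _ = 4 * c ^ 2 * κ * A * B := by ring

end MeasureTheory

/-- `bracketWeight a q ^ 2 = (1 + q ^ 2) ^ a` is the weight of `L^{2,a}`. -/
noncomputable def bracketWeight (a q : ℝ) : ℝ≥0∞ := ENNReal.ofReal ((1 + q ^ 2) ^ (a / 2))

noncomputable def expWeight (C q : ℝ) : ℝ≥0∞ := ENNReal.ofReal (Real.exp (C * |q|))

section Weights

variable {a C : ℝ}

@[fun_prop]
theorem measurable_bracketWeight (a : ℝ) : Measurable (bracketWeight a) := by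
  unfold bracketWeight; fun_prop

theorem bracketWeight_sq (a q : ℝ) : bracketWeight a q ^ 2 = ENNReal.ofReal ((1 + q ^ 2) ^ a) := by
  rw [bracketWeight, ← ENNReal.ofReal_pow (by positivity),
    ← Real.rpow_natCast ((1 + q ^ 2) ^ (a / 2)) 2, ← Real.rpow_mul (by positivity)]
  norm_num

theorem ofReal_rpow_mul_sq (a q : ℝ) {r : ℝ} (hr : 0 ≤ r) :
    ENNReal.ofReal ((1 + q ^ 2) ^ a * r ^ 2) = (bracketWeight a q * ENNReal.ofReal r) ^ 2 := by
  rw [ENNReal.ofReal_mul (by positivity), ENNReal.ofReal_pow hr, ← bracketWeight_sq, mul_pow]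

theorem bracketWeight_neg_mul (a q : ℝ) : bracketWeight (-a) q * bracketWeight a q = 1 := by
  rw [bracketWeight, bracketWeight, ← ENNReal.ofReal_mul (by positivity),
    ← Real.rpow_add (by positivity), neg_div, neg_add_cancel, Real.rpow_zero, ENNReal.ofReal_one]

theorem bracketWeight_le_of_sq_le (ha : 0 ≤ a) {x y : ℝ} (h : x ^ 2 ≤ y ^ 2) :
    bracketWeight a x ≤ bracketWeight a y :=
  ENNReal.ofReal_le_ofReal (Real.rpow_le_rpow (by positivity) (by linarith) (by linarith))

theorem bracketWeight_add_le (ha : 0 ≤ a) (x y : ℝ) :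
    bracketWeight a (x + y) ≤
      ENNReal.ofReal (4 ^ (a / 2)) * (bracketWeight a x + bracketWeight a y) := by
  set M := max (1 + x ^ 2) (1 + y ^ 2)
  have hM : 1 + (x + y) ^ 2 ≤ 4 * M := by
    nlinarith [le_max_left (1 + x ^ 2) (1 + y ^ 2), le_max_right (1 + x ^ 2) (1 + y ^ 2),
      sq_nonneg (x - y)]
  have hMr : M ^ (a / 2) ≤ (1 + x ^ 2) ^ (a / 2) + (1 + y ^ 2) ^ (a / 2) := by
    rcases max_choice (1 + x ^ 2) (1 + y ^ 2) with h | h <;> rw [show M = _ from h] <;>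
      linarith [Real.rpow_nonneg (by positivity : (0 : ℝ) ≤ 1 + x ^ 2) (a / 2),
        Real.rpow_nonneg (by positivity : (0 : ℝ) ≤ 1 + y ^ 2) (a / 2)]
  rw [bracketWeight, bracketWeight, bracketWeight, ← ENNReal.ofReal_add (by positivity)
    (by positivity), ← ENNReal.ofReal_mul (by positivity)]
  refine ENNReal.ofReal_le_ofReal ?_
  calc (1 + (x + y) ^ 2) ^ (a / 2) ≤ (4 * M) ^ (a / 2) :=
        Real.rpow_le_rpow (by positivity) hM (by linarith)
    _ = 4 ^ (a / 2) * M ^ (a / 2) := Real.mul_rpow (by norm_num) (by positivity)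
    _ ≤ _ := by gcongr

theorem lintegral_bracketWeight_sq_lt_top (ha : 1 / 2 < a) :
    ∫⁻ q, bracketWeight (-a) q ^ 2 < ⊤ := by
  have hint : Integrable (fun q : ℝ => (1 + ‖q‖ ^ 2) ^ (-(2 * a) / 2)) :=
    integrable_rpow_neg_one_add_norm_sq
      (by simp only [Module.finrank_self, Nat.cast_one]; linarith)
  refine lt_of_eq_of_lt (lintegral_congr fun q => ?_) hint.hasFiniteIntegral
  rw [bracketWeight_sq, Real.enorm_eq_ofReal (by positivity)]
  simp only [Real.norm_eq_abs, sq_abs]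
  congr 2
  ring

theorem expWeight_add_le (hC : 0 ≤ C) (x y : ℝ) :
    expWeight C (x + y) ≤ expWeight C x * expWeight C y := by
  rw [expWeight, expWeight, expWeight, ← ENNReal.ofReal_mul (by positivity), ← Real.exp_add]
  refine ENNReal.ofReal_le_ofReal (Real.exp_le_exp.2 ?_)
  nlinarith [abs_add_le x y]

theorem expWeight_mul_enorm (C q : ℝ) {E : Type*} [NormedAddCommGroup E] (z : E) :
    expWeight C q * ‖z‖ₑ = ENNReal.ofReal (Real.exp (C * |q|) * ‖z‖) := by
  rw [expWeight, ENNReal.ofReal_mul (by positivity), ofReal_norm]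

end Weights

theorem exists_lintegral_sq_bracketWeight_mul_lconvolution_le {a : ℝ} (ha : 1 / 2 < a) :
    ∃ K ≠ ⊤, ∀ f g : ℝ → ℝ≥0∞, Measurable f → Measurable g →
      ∫⁻ x, (bracketWeight a x * (f ⋆ₗ g) x) ^ 2 ≤
        K * (∫⁻ x, (bracketWeight a x * f x) ^ 2) * ∫⁻ x, (bracketWeight a x * g x) ^ 2 := by
  refine ⟨4 * ENNReal.ofReal (4 ^ (a / 2)) ^ 2 * ∫⁻ q, bracketWeight (-a) q ^ 2, ?_,
    fun f g hf hg => ?_⟩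
  · exact ENNReal.mul_ne_top (ENNReal.mul_ne_top ENNReal.ofNat_ne_top
      (ENNReal.pow_ne_top ENNReal.ofReal_ne_top)) (lintegral_bracketWeight_sq_lt_top ha).ne
  · exact lintegral_sq_mul_lconvolution_le (bracketWeight_add_le (by linarith))
      (fun q => (bracketWeight_neg_mul a q).ge) (measurable_bracketWeight a)
      (measurable_bracketWeight (-a)) hf hg

theorem exists_lintegral_sq_bracketWeight_mul_triple_lconvolution_le {a : ℝ} (ha : 1 / 2 < a) :
    ∃ K ≠ ⊤, ∀ f : ℝ → ℝ≥0∞, Measurable f →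
      ∫⁻ x, (bracketWeight a x * ((f ⋆ₗ f) ⋆ₗ f) x) ^ 2 ≤
        K * (∫⁻ x, (bracketWeight a x * f x) ^ 2) ^ 3 := by
  obtain ⟨K, hK, hconv⟩ := exists_lintegral_sq_bracketWeight_mul_lconvolution_le ha
  refine ⟨K ^ 2, ENNReal.pow_ne_top hK, fun f hf => ?_⟩
  calc ∫⁻ x, (bracketWeight a x * ((f ⋆ₗ f) ⋆ₗ f) x) ^ 2
      ≤ K * (∫⁻ x, (bracketWeight a x * (f ⋆ₗ f) x) ^ 2) * ∫⁻ x, (bracketWeight a x * f x) ^ 2 :=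
        hconv _ _ (measurable_lconvolution _ hf hf) hf
    _ ≤ K * (K * (∫⁻ x, (bracketWeight a x * f x) ^ 2) * ∫⁻ x, (bracketWeight a x * f x) ^ 2)
          * ∫⁻ x, (bracketWeight a x * f x) ^ 2 := by
        gcongr; exact hconv f f hf hf
    _ = K ^ 2 * (∫⁻ x, (bracketWeight a x * f x) ^ 2) ^ 3 := by ring

theorem enorm_convR_le (g h : ℝ → ℂ) (x : ℝ) :
    ‖convR g h x‖ₑ ≤ ((fun y => ‖g y‖ₑ) ⋆ₗ fun y => ‖h y‖ₑ) x := by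
  refine (enorm_integral_le_lintegral_enorm _).trans_eq (lintegral_congr fun y => ?_)
  rw [enorm_mul, neg_add_eq_sub]

section TripleConvolution

variable {f : ℝ → ℂ} {F : ℝ → ℝ≥0∞} {a C : ℝ}

theorem expWeight_mul_enorm_triple_convR_le (hC : 0 ≤ C)
    (hF : (fun q => expWeight C q * ‖f q‖ₑ) =ᵐ[volume] F) (q : ℝ) :
    expWeight C q * ‖convR (convR f f) f q‖ₑ ≤ ((F ⋆ₗ F) ⋆ₗ F) q := by
  set ψ : ℝ → ℝ≥0∞ := fun y => ‖f y‖ₑ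
  have hE := expWeight_add_le hC
  have hF' : expWeight C * ψ =ᵐ[volume] F := hF
  calc expWeight C q * ‖convR (convR f f) f q‖ₑ
      ≤ expWeight C q * ((ψ ⋆ₗ ψ) ⋆ₗ ψ) q :=
        mul_le_mul_right ((enorm_convR_le _ _ q).trans
          (lconvolution_mono (enorm_convR_le f f) le_rfl q)) _
    _ ≤ ((expWeight C * (ψ ⋆ₗ ψ)) ⋆ₗ (expWeight C * ψ)) q := mul_lconvolution_le_of_le_mul hE q
    _ ≤ (((expWeight C * ψ) ⋆ₗ (expWeight C * ψ)) ⋆ₗ (expWeight C * ψ)) q :=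
        lconvolution_mono (mul_lconvolution_le_of_le_mul hE) le_rfl q
    _ = ((F ⋆ₗ F) ⋆ₗ F) q := by
        rw [lconvolution_congr_ae hF' hF', lconvolution_congr_ae .rfl hF']

theorem bracketWeight_mul_enorm_triple_convR_le (ha : 0 ≤ a) (hC : 0 ≤ C)
    (hF : (fun q => expWeight C q * ‖f q‖ₑ) =ᵐ[volume] F) {p Q q : ℝ} (hQq : Q ^ 2 ≤ q ^ 2)
    (hpq : p ≤ |q|) :
    bracketWeight a Q * ‖convR (convR f f) f q‖ₑ ≤
      ENNReal.ofReal (Real.exp (-C * p)) * (bracketWeight a q * ((F ⋆ₗ F) ⋆ₗ F) q) := by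
  have hdecay : 1 ≤ ENNReal.ofReal (Real.exp (-C * p)) * expWeight C q := by
    rw [expWeight, ← ENNReal.ofReal_mul (by positivity), ← Real.exp_add]
    exact ENNReal.one_le_ofReal.2 (Real.one_le_exp (by nlinarith))
  calc bracketWeight a Q * ‖convR (convR f f) f q‖ₑ
      ≤ bracketWeight a q * (ENNReal.ofReal (Real.exp (-C * p)) * expWeight C q
          * ‖convR (convR f f) f q‖ₑ) := by
        gcongr
        · exact bracketWeight_le_of_sq_le ha hQq
        · exact le_mul_of_one_le_left (by positivity) hdecay
    _ ≤ bracketWeight a q * (ENNReal.ofReal (Real.exp (-C * p)) * ((F ⋆ₗ F) ⋆ₗ F) q) := by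
        rw [mul_assoc]
        gcongr
        exact expWeight_mul_enorm_triple_convR_le hC hF q
    _ = _ := by ring

theorem lintegral_indicator_triple_convR_le (ha : 0 ≤ a) (hC : 0 ≤ C)
    (hF : (fun q => expWeight C q * ‖f q‖ₑ) =ᵐ[volume] F) {S : Set ℝ} {p s : ℝ}
    (hS : ∀ Q ∈ S, p ≤ |Q - s| ∧ Q ^ 2 ≤ (Q - s) ^ 2) :
    ∫⁻ Q, ENNReal.ofReal ((1 + Q ^ 2) ^ a
        * ‖S.indicator (fun x => convR (convR f f) f (x - s)) Q‖ ^ 2) ≤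
      ENNReal.ofReal (Real.exp (-C * p)) ^ 2
        * ∫⁻ q, (bracketWeight a q * ((F ⋆ₗ F) ⋆ₗ F) q) ^ 2 := by
  calc ∫⁻ Q, ENNReal.ofReal ((1 + Q ^ 2) ^ a
        * ‖S.indicator (fun x => convR (convR f f) f (x - s)) Q‖ ^ 2)
      ≤ ∫⁻ Q, ENNReal.ofReal (Real.exp (-C * p)) ^ 2
          * (bracketWeight a (Q - s) * ((F ⋆ₗ F) ⋆ₗ F) (Q - s)) ^ 2 := by
        refine lintegral_mono fun Q => ?_
        rw [ofReal_rpow_mul_sq _ _ (norm_nonneg _), ofReal_norm]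
        by_cases hQ : Q ∈ S
        · rw [Set.indicator_of_mem hQ, ← mul_pow]
          exact pow_le_pow_left' (bracketWeight_mul_enorm_triple_convR_le ha hC hF (hS Q hQ).2
            (hS Q hQ).1) 2
        · simp [Set.indicator_of_notMem hQ]
    _ = ENNReal.ofReal (Real.exp (-C * p)) ^ 2
          * ∫⁻ q, (bracketWeight a q * ((F ⋆ₗ F) ⋆ₗ F) q) ^ 2 := by
        rw [lintegral_const_mul' _ _ (ENNReal.pow_ne_top ENNReal.ofReal_ne_top),
          lintegral_sub_right_eq_self (fun q => (bracketWeight a q * ((F ⋆ₗ F) ⋆ₗ F) q) ^ 2) s]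

end TripleConvolution

theorem sq_le_sq_sub_two_mul_of_mem_Icc {p Q : ℝ} {m : ℤ} (hm : m = 1 ∨ m = -1)
    (hQ : Q ∈ Set.Icc (-p) p) : p ≤ |Q - 2 * m * p| ∧ Q ^ 2 ≤ (Q - 2 * m * p) ^ 2 := by
  obtain ⟨h1, h2⟩ := hQ
  rcases hm with rfl | rfl <;> push_cast <;> refine ⟨?_, by nlinarith⟩
  · rw [abs_of_nonpos (by linarith)]; linarith
  · rw [abs_of_nonneg (by linarith)]; linarith

theorem aemeasurable_of_aemeasurable_mul_sq {α : Type*} [MeasurableSpace α] {μ : Measure α}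
    {ρ g : α → ℝ} (hρ : Measurable ρ) (hρ0 : ∀ x, 0 < ρ x) (hg : ∀ x, 0 ≤ g x)
    (h : AEMeasurable (fun x => ρ x * g x ^ 2) μ) : AEMeasurable g μ := by
  have hsqrt : g = fun x => √(ρ x * g x ^ 2 / ρ x) := by
    ext x
    rw [mul_div_cancel_left₀ _ (hρ0 x).ne', Real.sqrt_sq (hg x)]
  rw [hsqrt]
  exact (h.div hρ.aemeasurable).sqrt

theorem ofReal_integral_le_lintegral_ofReal {α : Type*} [MeasurableSpace α] {μ : Measure α}
    {g : α → ℝ} (hg : ∀ x, 0 ≤ g x) :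
    ENNReal.ofReal (∫ x, g x ∂μ) ≤ ∫⁻ x, ENNReal.ofReal (g x) ∂μ := by
  calc ENNReal.ofReal (∫ x, g x ∂μ) ≤ ‖∫ x, g x ∂μ‖ₑ := by
        rw [Real.enorm_eq_ofReal_abs]; exact ENNReal.ofReal_le_ofReal (le_abs_self _)
    _ ≤ ∫⁻ x, ‖g x‖ₑ ∂μ := enorm_integral_le_lintegral_enorm _
    _ = ∫⁻ x, ENNReal.ofReal (g x) ∂μ := lintegral_congr fun x => Real.enorm_eq_ofReal (hg x)

theorem rpow_half_le_of_ofReal_le {I J e : ℝ} {K : ℝ≥0∞} (hK : K ≠ ⊤) (hJ : 0 ≤ J) (he : 0 ≤ e)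
    (h : ENNReal.ofReal I ≤ ENNReal.ofReal e ^ 2 * (K * ENNReal.ofReal J ^ 3)) :
    I ^ (1 / 2 : ℝ) ≤ (K.toReal + 1) * e * (J ^ (1 / 2 : ℝ)) ^ 3 := by
  rw [← ENNReal.ofReal_toReal hK, ← ENNReal.ofReal_pow hJ,
    ← ENNReal.ofReal_mul ENNReal.toReal_nonneg, ← ENNReal.ofReal_pow he,
    ← ENNReal.ofReal_mul (by positivity),
    ENNReal.ofReal_le_ofReal_iff (by positivity)] at h
  have hk := ENNReal.toReal_nonneg (a := K)
  rw [← Real.sqrt_eq_rpow, ← Real.sqrt_eq_rpow]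
  refine Real.sqrt_le_iff.2 ⟨by positivity, h.trans ?_⟩
  have hkk : K.toReal ≤ (K.toReal + 1) ^ 2 := by nlinarith
  calc e ^ 2 * (K.toReal * J ^ 3) ≤ e ^ 2 * ((K.toReal + 1) ^ 2 * J ^ 3) := by gcongr
    _ = ((K.toReal + 1) * e * √J ^ 3) ^ 2 := by
        rw [mul_pow, mul_pow, ← pow_mul, mul_comm 3 2, pow_mul, Real.sq_sqrt hJ]; ring

theorem shifted_triple_convolution_exponentially_small (a : ℝ) (ha : a > 1 / 2) :
    ∃ C' > 0, ∀ C : ℝ, 0 < C → ∀ f : ℝ → ℂ, ∀ m : ℤ, (m = 1 ∨ m = -1) →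
      ∀ α : ℝ, 0 < α →
      Integrable (fun q => (1 + q ^ 2) ^ a * ‖f q‖ ^ 2) →
      Integrable (fun q => (1 + q ^ 2) ^ a * (Real.exp (C * |q|) * ‖f q‖) ^ 2) →
      (∫ Q, (1 + Q ^ 2) ^ a
          * ‖Set.indicator (Set.Icc (-(Real.pi / α)) (Real.pi / α))
              (fun x => convR (convR f f) f (x - 2 * m * Real.pi / α)) Q‖ ^ 2) ^ (1/2 : ℝ)
        ≤ C' * Real.exp (-C * Real.pi / α)
            * ((∫ Q, (1 + Q ^ 2) ^ a
                * (Real.exp (C * |Q|) * ‖f Q‖) ^ 2) ^ (1/2 : ℝ)) ^ 3 := by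
  obtain ⟨K, hK, hKtriple⟩ := exists_lintegral_sq_bracketWeight_mul_triple_lconvolution_le ha
  refine ⟨K.toReal + 1, by positivity, fun C hC f m hm α _ _ hf => ?_⟩
  have hfm : AEMeasurable (fun q => expWeight C q * ‖f q‖ₑ) := by
    simp only [expWeight_mul_enorm]
    exact ENNReal.measurable_ofReal.comp_aemeasurable (aemeasurable_of_aemeasurable_mul_sq
      (by fun_prop) (fun q => by positivity) (fun q => by positivity) hf.aemeasurable)
  have hN : ENNReal.ofReal (∫ Q, (1 + Q ^ 2) ^ a * (Real.exp (C * |Q|) * ‖f Q‖) ^ 2)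
      = ∫⁻ q, (bracketWeight a q * hfm.mk _ q) ^ 2 := by
    rw [ofReal_integral_eq_lintegral_ofReal hf (ae_of_all _ fun q => by positivity)]
    refine lintegral_congr_ae (hfm.ae_eq_mk.mono fun q hq => ?_)
    dsimp only at hq ⊢
    rw [ofReal_rpow_mul_sq _ _ (by positivity), ← expWeight_mul_enorm, hq]
  simp only [mul_div_assoc]
  refine rpow_half_le_of_ofReal_le hK (integral_nonneg fun q => by positivity) (by positivity) ?_
  rw [hN]
  calc _ ≤ _ := ofReal_integral_le_lintegral_ofReal fun Q => by positivity
    _ ≤ _ := lintegral_indicator_triple_convR_le (by linarith) hC.le hfm.ae_eq_mk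
        fun Q hQ => sq_le_sq_sub_two_mul_of_mem_Icc hm hQ
    _ ≤ _ := mul_le_mul_right (hKtriple _ hfm.measurable_mk) _
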